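/- arXiv:1705.00708 — 2 statements merged into one kernel-verified Lean document; each statement's English description precedes it below -/
import Mathlib

section
/- Let A, Ā ∈ ℝ^{p×l} with δA = A − Ā, let A† be a Moore–Penrose pseudoinverse of A and Ā† a Moore–Penrose pseudoinverse of Ā. Let x_exact ∈ ℝ^l be nonzero with A†A x_exact = x_exact (x_exact lies in the row space of A), let δẼ ∈ ℝ^p, set b = A x_exact + δẼ, and let x̄_LS = Ā† b. If ‖δA‖₂ = e_A ‖A‖₂ and ‖δẼ‖ = e_b ‖b‖, then the relative solution error satisfies ‖x_exact − x̄_LS‖ / ‖x_exact‖ ≤ e_A ‖Ā†‖₂ ‖A‖₂ + e_A ‖A†‖₂ ‖A‖₂ + e_b ‖Ā†‖₂ ‖b‖ / ‖x_exact‖. -/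
open Matrix

/-- The operator norm of a real matrix induced by the Euclidean vector norms
(the largest singular value). -/
noncomputable def l2OpNorm {p l : ℕ} (A : Matrix (Fin p) (Fin l) ℝ) : ℝ :=
  ‖LinearMap.toContinuousLinearMap (Matrix.toEuclideanLin A)‖

/-- Action of a matrix on a Euclidean vector. -/
noncomputable def applyMat {p l : ℕ} (A : Matrix (Fin p) (Fin l) ℝ)
    (x : EuclideanSpace ℝ (Fin l)) : EuclideanSpace ℝ (Fin p) :=
  Matrix.toEuclideanLin A x

/-- `Ad` is a Moore–Penrose pseudoinverse of `A`. -/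
def IsMoorePenrose {p l : ℕ} (A : Matrix (Fin p) (Fin l) ℝ)
    (Ad : Matrix (Fin l) (Fin p) ℝ) : Prop :=
  A * Ad * A = A ∧ Ad * A * Ad = Ad ∧ (A * Ad)ᵀ = A * Ad ∧ (Ad * A)ᵀ = Ad * A

open scoped RealInnerProductSpace

lemma applyMat_mul {p l q : ℕ} (M : Matrix (Fin p) (Fin l) ℝ)
    (N : Matrix (Fin l) (Fin q) ℝ) (x : EuclideanSpace ℝ (Fin q)) :
    applyMat (M * N) x = applyMat M (applyMat N x) := by
  simp [applyMat, Matrix.toEuclideanLin_apply, Matrix.mulVec_mulVec]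

lemma applyMat_norm_le {p l : ℕ} (M : Matrix (Fin p) (Fin l) ℝ)
    (x : EuclideanSpace ℝ (Fin l)) :
    ‖applyMat M x‖ ≤ l2OpNorm M * ‖x‖ := by
  simpa [applyMat, l2OpNorm] using
    (LinearMap.toContinuousLinearMap (Matrix.toEuclideanLin M)).le_opNorm x

lemma transpose_eq_conjTranspose {p l : ℕ} (M : Matrix (Fin p) (Fin l) ℝ) :
    Mᵀ = Mᴴ := by
  ext i j; simp [Matrix.conjTranspose_apply]

lemma l2OpNorm_transpose {p l : ℕ} (M : Matrix (Fin p) (Fin l) ℝ) :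
    l2OpNorm Mᵀ = l2OpNorm M := by
  rw [l2OpNorm, transpose_eq_conjTranspose, Matrix.toEuclideanLin_conjTranspose_eq_adjoint,
    LinearMap.adjoint_toContinuousLinearMap]
  exact (ContinuousLinearMap.adjoint : _ ≃ₗᵢ⋆[ℝ] _).norm_map _

lemma applyMat_transpose_inner {p l : ℕ} (M : Matrix (Fin p) (Fin l) ℝ)
    (w : EuclideanSpace ℝ (Fin p)) (u : EuclideanSpace ℝ (Fin l)) :
    ⟪applyMat Mᵀ w, u⟫ = ⟪w, applyMat M u⟫ := by
  rw [applyMat, applyMat, transpose_eq_conjTranspose,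
    Matrix.toEuclideanLin_conjTranspose_eq_adjoint]
  exact LinearMap.adjoint_inner_left _ _ _

lemma applyMat_sub_mat {p l : ℕ} (M N : Matrix (Fin p) (Fin l) ℝ)
    (x : EuclideanSpace ℝ (Fin l)) :
    applyMat (M - N) x = applyMat M x - applyMat N x := by
  simp [applyMat, map_sub, LinearMap.sub_apply]

lemma applyMat_add_mat {p l : ℕ} (M N : Matrix (Fin p) (Fin l) ℝ)
    (x : EuclideanSpace ℝ (Fin l)) :
    applyMat (M + N) x = applyMat M x + applyMat N x := by
  simp [applyMat, map_add, LinearMap.add_apply]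

lemma applyMat_one {l : ℕ} (x : EuclideanSpace ℝ (Fin l)) :
    applyMat (1 : Matrix (Fin l) (Fin l) ℝ) x = x := by
  simp [applyMat, Matrix.toEuclideanLin_apply]

lemma proj_norm_le {l : ℕ} (P : Matrix (Fin l) (Fin l) ℝ) (hsymm : Pᵀ = P)
    (hidem : P * P = P) (x : EuclideanSpace ℝ (Fin l)) :
    ‖applyMat P x‖ ≤ ‖x‖ := by
  have key : ⟪applyMat P x, applyMat P x⟫ = ⟪x, applyMat P x⟫ := by
    nth_rewrite 1 [← hsymm]
    rw [applyMat_transpose_inner, ← applyMat_mul, hidem]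
  rcases eq_or_lt_of_le (norm_nonneg (applyMat P x)) with h0 | h0
  · rw [← h0]; exact norm_nonneg x
  · have h1 : ‖applyMat P x‖ * ‖applyMat P x‖ ≤ ‖x‖ * ‖applyMat P x‖ := by
      rw [← real_inner_self_eq_norm_mul_norm, key]
      exact real_inner_le_norm _ _
    exact le_of_mul_le_mul_right h1 h0

theorem stmt0 {p l : ℕ} (A Abar : Matrix (Fin p) (Fin l) ℝ)
    (dA : Matrix (Fin p) (Fin l) ℝ) (hdA : dA = A - Abar)
    (Ad Abard : Matrix (Fin l) (Fin p) ℝ)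
    (hA : IsMoorePenrose A Ad) (hAbar : IsMoorePenrose Abar Abard)
    (x_exact : EuclideanSpace ℝ (Fin l)) (hx : x_exact ≠ 0)
    (hrow : applyMat Ad (applyMat A x_exact) = x_exact)
    (dE b : EuclideanSpace ℝ (Fin p))
    (hb : b = applyMat A x_exact + dE)
    (xLS : EuclideanSpace ℝ (Fin l)) (hxLS : xLS = applyMat Abard b)
    (eA eb : ℝ)
    (heA : l2OpNorm dA = eA * l2OpNorm A)
    (heb : ‖dE‖ = eb * ‖b‖) :
    ‖x_exact - xLS‖ / ‖x_exact‖ ≤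
      eA * l2OpNorm Abard * l2OpNorm A + eA * l2OpNorm Ad * l2OpNorm A +
        eb * l2OpNorm Abard * ‖b‖ / ‖x_exact‖ := by
  have hApm : A = Abar + dA := by rw [hdA]; abel
  set Q : Matrix (Fin l) (Fin l) ℝ := 1 - Abard * Abar with hQ
  have hQsymm : Qᵀ = Q := by
    rw [hQ, Matrix.transpose_sub, Matrix.transpose_one, hAbar.2.2.2]
  have hPP : Abard * Abar * (Abard * Abar) = Abard * Abar := by
    rw [Matrix.mul_assoc, ← Matrix.mul_assoc Abar Abard Abar, hAbar.1]
  have hQidem : Q * Q = Q := by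
    rw [hQ, sub_mul, one_mul, mul_sub, mul_one, hPP]
    abel
  -- decomposition
  have hdecomp : x_exact - xLS =
      applyMat Q x_exact - applyMat (Abard * dA) x_exact - applyMat Abard dE := by
    have h1 : applyMat Q x_exact = x_exact - applyMat (Abard * Abar) x_exact := by
      rw [hQ, applyMat_sub_mat, applyMat_one]
    rw [h1, hxLS, hb]
    have h2 : applyMat Abard (applyMat A x_exact + dE)
        = applyMat (Abard * Abar) x_exact + applyMat (Abard * dA) x_exact
          + applyMat Abard dE := by
      have h2a : applyMat Abard (applyMat A x_exact + dE)
          = applyMat Abard (applyMat A x_exact) + applyMat Abard dE := by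
        simp [applyMat, map_add]
      rw [h2a, ← applyMat_mul]
      nth_rewrite 1 [hApm]
      rw [Matrix.mul_add, applyMat_add_mat]
    rw [h2]; abel
  -- Q kills the row space of Abar
  have h3 : Abard * Abar * Abarᵀ = Abarᵀ := by
    calc Abard * Abar * Abarᵀ = (Abard * Abar)ᵀ * Abarᵀ := by rw [hAbar.2.2.2]
      _ = (Abar * (Abard * Abar))ᵀ := (Matrix.transpose_mul _ _).symm
      _ = Abarᵀ := by rw [← Matrix.mul_assoc, hAbar.1]
  have hQAbar : Q * Abarᵀ = 0 := by
    rw [hQ, Matrix.sub_mul, Matrix.one_mul, h3, sub_self]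
  have hxrep : applyMat Q x_exact = applyMat Q (applyMat dAᵀ (applyMat Adᵀ x_exact)) := by
    have hAdA : Aᵀ * Adᵀ = Ad * A := by rw [← Matrix.transpose_mul, hA.2.2.2]
    have hx1 : applyMat (Aᵀ * Adᵀ) x_exact = x_exact := by
      rw [hAdA, applyMat_mul, hrow]
    have hsplit : Q * (Aᵀ * Adᵀ) = Q * (dAᵀ * Adᵀ) := by
      nth_rewrite 1 [hApm]
      rw [Matrix.transpose_add, Matrix.add_mul, Matrix.mul_add, ← Matrix.mul_assoc,
        hQAbar, Matrix.zero_mul, zero_add]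
    calc applyMat Q x_exact
        = applyMat Q (applyMat (Aᵀ * Adᵀ) x_exact) := by rw [hx1]
      _ = applyMat (Q * (Aᵀ * Adᵀ)) x_exact := (applyMat_mul _ _ _).symm
      _ = applyMat (Q * (dAᵀ * Adᵀ)) x_exact := by rw [hsplit]
      _ = applyMat Q (applyMat dAᵀ (applyMat Adᵀ x_exact)) := by
          rw [applyMat_mul, applyMat_mul]
  -- bounds
  have hdA0 : (0:ℝ) ≤ l2OpNorm dA := norm_nonneg _
  have hT1 : ‖applyMat Q x_exact‖ ≤ l2OpNorm dA * (l2OpNorm Ad * ‖x_exact‖) := by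
    rw [hxrep]
    calc ‖applyMat Q (applyMat dAᵀ (applyMat Adᵀ x_exact))‖
        ≤ ‖applyMat dAᵀ (applyMat Adᵀ x_exact)‖ := proj_norm_le Q hQsymm hQidem _
      _ ≤ l2OpNorm dAᵀ * ‖applyMat Adᵀ x_exact‖ := applyMat_norm_le _ _
      _ ≤ l2OpNorm dAᵀ * (l2OpNorm Adᵀ * ‖x_exact‖) := by
          apply mul_le_mul_of_nonneg_left (applyMat_norm_le _ _)
          rw [l2OpNorm_transpose]; exact hdA0
      _ = l2OpNorm dA * (l2OpNorm Ad * ‖x_exact‖) := by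
          rw [l2OpNorm_transpose, l2OpNorm_transpose]
  have hT2 : ‖applyMat (Abard * dA) x_exact‖ ≤
      l2OpNorm Abard * (l2OpNorm dA * ‖x_exact‖) := by
    rw [applyMat_mul]
    calc ‖applyMat Abard (applyMat dA x_exact)‖
        ≤ l2OpNorm Abard * ‖applyMat dA x_exact‖ := applyMat_norm_le _ _
      _ ≤ l2OpNorm Abard * (l2OpNorm dA * ‖x_exact‖) :=
          mul_le_mul_of_nonneg_left (applyMat_norm_le _ _) (norm_nonneg _)
  have hT3 : ‖applyMat Abard dE‖ ≤ l2OpNorm Abard * ‖dE‖ := applyMat_norm_le _ _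
  have htri : ‖x_exact - xLS‖ ≤
      ‖applyMat Q x_exact‖ + ‖applyMat (Abard * dA) x_exact‖ + ‖applyMat Abard dE‖ := by
    rw [hdecomp]
    calc ‖applyMat Q x_exact - applyMat (Abard * dA) x_exact - applyMat Abard dE‖
        ≤ ‖applyMat Q x_exact - applyMat (Abard * dA) x_exact‖ + ‖applyMat Abard dE‖ :=
          norm_sub_le _ _
      _ ≤ ‖applyMat Q x_exact‖ + ‖applyMat (Abard * dA) x_exact‖ + ‖applyMat Abard dE‖ := by
          have := norm_sub_le (applyMat Q x_exact) (applyMat (Abard * dA) x_exact)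
          linarith
  have hxpos : (0:ℝ) < ‖x_exact‖ := norm_pos_iff.mpr hx
  rw [div_le_iff₀ hxpos]
  have hexp : (eA * l2OpNorm Abard * l2OpNorm A + eA * l2OpNorm Ad * l2OpNorm A +
      eb * l2OpNorm Abard * ‖b‖ / ‖x_exact‖) * ‖x_exact‖
      = eA * l2OpNorm Abard * l2OpNorm A * ‖x_exact‖ +
        eA * l2OpNorm Ad * l2OpNorm A * ‖x_exact‖ + eb * l2OpNorm Abard * ‖b‖ := by
    field_simp
  rw [hexp]
  have e1 : l2OpNorm dA * (l2OpNorm Ad * ‖x_exact‖)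
      = eA * l2OpNorm Ad * l2OpNorm A * ‖x_exact‖ := by rw [heA]; ring
  have e2 : l2OpNorm Abard * (l2OpNorm dA * ‖x_exact‖)
      = eA * l2OpNorm Abard * l2OpNorm A * ‖x_exact‖ := by rw [heA]; ring
  have e3 : l2OpNorm Abard * ‖dE‖ = eb * l2OpNorm Abard * ‖b‖ := by rw [heb]; ring
  linarith [hT1, hT2, hT3, htri, e1.le, e2.le, e3.le]
end

section
/- Let A, Ā ∈ ℝ^{p×l} with δA = A − Ā, let A† be a Moore–Penrose pseudoinverse of A and Ā† a Moore–Penrose pseudoinverse of Ā. Let x_exact ∈ ℝ^l satisfy A† A x_exact = x_exact, let δẼ ∈ ℝ^p, set b = A x_exact + δẼ, and let x̄_LS = Ā† b. Then x_exact − x̄_LS = −Ā† δA x_exact − Ā† δẼ + (I − Ā† Ā) δAᵀ (A†)ᵀ x_exact. -/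
open Matrix

theorem stmt5 {p l : ℕ} (A Abar : Matrix (Fin p) (Fin l) ℝ)
    (dA : Matrix (Fin p) (Fin l) ℝ) (hdA : dA = A - Abar)
    (Ad Abard : Matrix (Fin l) (Fin p) ℝ)
    (hA : IsMoorePenrose A Ad) (hAbar : IsMoorePenrose Abar Abard)
    (x_exact : Fin l → ℝ) (hrow : (Ad * A).mulVec x_exact = x_exact)
    (dE : Fin p → ℝ) (b : Fin p → ℝ) (hb : b = A.mulVec x_exact + dE)
    (xLS : Fin l → ℝ) (hxLS : xLS = Abard.mulVec b) :
    x_exact - xLS =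
      -((Abard * dA).mulVec x_exact) - Abard.mulVec dE +
        ((1 - Abard * Abar) * dAᵀ * Adᵀ).mulVec x_exact := by
  obtain ⟨hA1, hA2, hA3, hA4⟩ := hA
  obtain ⟨hB1, hB2, hB3, hB4⟩ := hAbar
  have hsym : Aᵀ * Adᵀ = Ad * A := by rw [← transpose_mul, hA4]
  have hx : (Aᵀ * Adᵀ).mulVec x_exact = x_exact := by rw [hsym, hrow]
  have hbar0 : Abard * Abar * Abarᵀ = Abarᵀ := by
    calc Abard * Abar * Abarᵀ = (Abar * (Abard * Abar))ᵀ := by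
          rw [transpose_mul, hB4]
      _ = Abarᵀ := by rw [← Matrix.mul_assoc, hB1]
  have h0 : (1 - Abard * Abar) * Abarᵀ = 0 := by
    rw [Matrix.sub_mul, Matrix.one_mul, hbar0, sub_self]
  have key : (1 - Abard * A) * (Aᵀ * Adᵀ) =
      -(Abard * dA) * (Aᵀ * Adᵀ) + (1 - Abard * Abar) * dAᵀ * Adᵀ := by
    subst hdA
    have expand : (1 - Abard * Abar) * (A - Abar)ᵀ * Adᵀ
        = (1 - Abard * Abar) * Aᵀ * Adᵀ := by
      rw [transpose_sub, Matrix.mul_sub, h0, sub_zero]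
    rw [expand]
    simp only [Matrix.sub_mul, Matrix.mul_sub, Matrix.add_mul, Matrix.one_mul, Matrix.mul_assoc, Matrix.neg_mul]
    abel
  have h1 : ((1 - Abard * A) * (Aᵀ * Adᵀ)).mulVec x_exact
      = x_exact - (Abard * A).mulVec x_exact := by
    rw [← Matrix.mulVec_mulVec, hx, Matrix.sub_mulVec, Matrix.one_mulVec]
  have h2 : (-(Abard * dA) * (Aᵀ * Adᵀ)).mulVec x_exact
      = -((Abard * dA).mulVec x_exact) := by
    rw [← Matrix.mulVec_mulVec, hx, Matrix.neg_mulVec]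
  have main : x_exact - (Abard * A).mulVec x_exact
      = -((Abard * dA).mulVec x_exact)
        + ((1 - Abard * Abar) * dAᵀ * Adᵀ).mulVec x_exact := by
    rw [← h1, key, Matrix.add_mulVec, h2]
  rw [hxLS, hb, Matrix.mulVec_add]
  have h3 : Abard.mulVec (A.mulVec x_exact) = (Abard * A).mulVec x_exact := by
    rw [Matrix.mulVec_mulVec]
  rw [h3]
  have h4 : x_exact - ((Abard * A).mulVec x_exact + Abard.mulVec dE)
      = (x_exact - (Abard * A).mulVec x_exact) - Abard.mulVec dE := by abel
  rw [h4, main]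
  abel
end
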